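/- Let n ≥ 2, let a ∈ ℝⁿ with |a| > 1, set r = √(|a|² − 1), and let σ(x) = a + r²·(x − a)/|x − a|² be the inversion in the sphere of center a and radius r (a hyperbolic reflection of the Poincaré ball). Let P, E be points of the open unit ball 𝔹ⁿ with |P − a| < r and |E − a| ≤ r. Then d(P, E) ≤ d(σ(P), E), where d(x,y) = 2·arsinh( |x − y| / √((1−|x|²)(1−|y|²)) ) is the hyperbolic distance on 𝔹ⁿ; moreover equality holds if and only if |E − a| = r. -/

import Mathlib

open Real

/-- Hyperbolic distance on the Poincaré ball model. -/
noncomputable def hdist {n : ℕ} (x y : EuclideanSpace ℝ (Fin n)) : ℝ :=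
  2 * Real.arsinh (‖x - y‖ / Real.sqrt ((1 - ‖x‖ ^ 2) * (1 - ‖y‖ ^ 2)))

set_option maxHeartbeats 1000000 in
theorem stmt12 (n : ℕ) (hn : 2 ≤ n)
    (a : EuclideanSpace ℝ (Fin n)) (ha : 1 < ‖a‖)
    (r : ℝ) (hr : r = Real.sqrt (‖a‖ ^ 2 - 1))
    (σ : EuclideanSpace ℝ (Fin n) → EuclideanSpace ℝ (Fin n))
    (hσ : ∀ x : EuclideanSpace ℝ (Fin n), σ x = a + (r ^ 2 / ‖x - a‖ ^ 2) • (x - a))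
    (P Q : EuclideanSpace ℝ (Fin n)) (hP : ‖P‖ < 1) (hQ : ‖Q‖ < 1)
    (hPa : ‖P - a‖ < r) (hQa : ‖Q - a‖ ≤ r) :
    hdist P Q ≤ hdist (σ P) Q ∧ (hdist P Q = hdist (σ P) Q ↔ ‖Q - a‖ = r) := by
  have hr2 : r ^ 2 = ‖a‖ ^ 2 - 1 := by
    rw [hr]; exact Real.sq_sqrt (by nlinarith)
  have hrpos : 0 < r := by
    rw [hr]; exact Real.sqrt_pos.mpr (by nlinarith)
  have hPne : P - a ≠ 0 := by
    intro h
    have : P = a := by simpa [sub_eq_zero] using h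
    rw [this] at hP; linarith
  have hPan : (0:ℝ) < ‖P - a‖ := norm_pos_iff.mpr hPne
  set s := ‖P - a‖ ^ 2 with hsdef
  have hs : (0:ℝ) < s := pow_pos hPan 2
  set t := ‖Q - a‖ ^ 2 with htdef
  set k : ℝ := inner ℝ (P - a) (Q - a) with hkdef
  set ip : ℝ := inner ℝ P a with hipdef
  set c : ℝ := r ^ 2 / s with hcdef
  have hcs : c * s = r ^ 2 := by rw [hcdef, div_mul_cancel₀ _ hs.ne']
  have hσP : σ P = a + c • (P - a) := hσ P
  -- norm expansions
  have hPQ : ‖P - Q‖ ^ 2 = s + t - 2 * k := by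
    have h1 : P - Q = (P - a) - (Q - a) := by abel
    rw [h1, norm_sub_sq_real, ← hsdef, ← htdef, ← hkdef]; ring
  have hσPQ : ‖σ P - Q‖ ^ 2 = c ^ 2 * s + t - 2 * (c * k) := by
    have h1 : σ P - Q = c • (P - a) - (Q - a) := by
      rw [hσP]; abel
    rw [h1, norm_sub_sq_real, real_inner_smul_left, norm_smul, Real.norm_eq_abs, mul_pow,
      sq_abs, ← hsdef, ← htdef, ← hkdef]
    ring
  have hip : s = ‖P‖ ^ 2 - 2 * ip + ‖a‖ ^ 2 := by
    rw [hsdef, norm_sub_sq_real, ← hipdef]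
  have hinner_a : (inner ℝ a (P - a) : ℝ) = ip - ‖a‖ ^ 2 := by
    rw [inner_sub_right, real_inner_self_eq_norm_sq, real_inner_comm, ← hipdef]
  have h1 : ‖σ P‖ ^ 2 = ‖a‖ ^ 2 + 2 * (c * (ip - ‖a‖ ^ 2)) + c ^ 2 * s := by
    rw [hσP, norm_add_sq_real, real_inner_smul_right, hinner_a, norm_smul, Real.norm_eq_abs,
      mul_pow, sq_abs, ← hsdef]
  have hsne : ‖P‖ ^ 2 - 2 * ip + ‖a‖ ^ 2 ≠ 0 := by rw [← hip]; exact hs.ne'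
  have hσnorm' : (1 - ‖σ P‖ ^ 2) * s = r ^ 2 * (1 - ‖P‖ ^ 2) := by
    rw [h1, hcdef, hip, hr2]
    field_simp
    ring
  have hσnorm : 1 - ‖σ P‖ ^ 2 = r ^ 2 * (1 - ‖P‖ ^ 2) / s := by
    rw [eq_div_iff hs.ne']; exact hσnorm'
  have hA : (0:ℝ) < 1 - ‖P‖ ^ 2 := by nlinarith [norm_nonneg P]
  have hB : (0:ℝ) < 1 - ‖Q‖ ^ 2 := by nlinarith [norm_nonneg Q]
  have hr2pos : (0:ℝ) < r ^ 2 := pow_pos hrpos 2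
  have hD : (0:ℝ) < 1 - ‖σ P‖ ^ 2 := by
    rw [hσnorm]; exact div_pos (mul_pos hr2pos hA) hs
  have hcs2 : c ^ 2 * s * s = r ^ 2 * r ^ 2 := by
    calc c ^ 2 * s * s = (c * s) * (c * s) := by ring
    _ = r ^ 2 * r ^ 2 := by rw [hcs]
  have hkey : ‖σ P - Q‖ ^ 2 * s - r ^ 2 * ‖P - Q‖ ^ 2 = (s - r ^ 2) * (t - r ^ 2) := by
    rw [hσPQ, hPQ]
    linear_combination hcs2 - 2 * k * hcs
  set u : ℝ := ‖P - Q‖ / Real.sqrt ((1 - ‖P‖ ^ 2) * (1 - ‖Q‖ ^ 2)) with hudef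
  set v : ℝ := ‖σ P - Q‖ / Real.sqrt ((1 - ‖σ P‖ ^ 2) * (1 - ‖Q‖ ^ 2)) with hvdef
  have hu0 : 0 ≤ u := div_nonneg (norm_nonneg _) (Real.sqrt_nonneg _)
  have hv0 : 0 ≤ v := div_nonneg (norm_nonneg _) (Real.sqrt_nonneg _)
  have hu2 : u ^ 2 = ‖P - Q‖ ^ 2 / ((1 - ‖P‖ ^ 2) * (1 - ‖Q‖ ^ 2)) := by
    rw [hudef, div_pow, Real.sq_sqrt (mul_pos hA hB).le]
  have hDB : (0:ℝ) < (1 - ‖σ P‖ ^ 2) * (1 - ‖Q‖ ^ 2) := mul_pos hD hB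
  have hRAB : (0:ℝ) < r ^ 2 * (1 - ‖P‖ ^ 2) * (1 - ‖Q‖ ^ 2) := mul_pos (mul_pos hr2pos hA) hB
  have hAB : (0:ℝ) < (1 - ‖P‖ ^ 2) * (1 - ‖Q‖ ^ 2) := mul_pos hA hB
  have hv2 : v ^ 2 = ‖σ P - Q‖ ^ 2 * s / (r ^ 2 * (1 - ‖P‖ ^ 2) * (1 - ‖Q‖ ^ 2)) := by
    rw [hvdef, div_pow, Real.sq_sqrt hDB.le, hσnorm]
    rw [div_eq_div_iff (by rw [← hσnorm]; exact hDB.ne') hRAB.ne']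
    field_simp
  have heq : v ^ 2 - u ^ 2 = (r ^ 2 - s) * (r ^ 2 - t) /
      (r ^ 2 * (1 - ‖P‖ ^ 2) * (1 - ‖Q‖ ^ 2)) := by
    rw [hu2, hv2, div_sub_div _ _ hRAB.ne' hAB.ne', div_eq_div_iff (mul_pos hRAB hAB).ne' hRAB.ne']
    linear_combination ((1 - ‖P‖ ^ 2) * (1 - ‖Q‖ ^ 2) * (r ^ 2 * (1 - ‖P‖ ^ 2) * (1 - ‖Q‖ ^ 2))) * hkey
  have hsr : s < r ^ 2 := by
    rw [hsdef]; exact pow_lt_pow_left₀ hPa (norm_nonneg _) two_ne_zero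
  have htr : t ≤ r ^ 2 := by
    rw [htdef]; exact pow_le_pow_left₀ (norm_nonneg _) hQa 2
  have hnum : (0:ℝ) ≤ (r ^ 2 - s) * (r ^ 2 - t) :=
    mul_nonneg (by linarith) (by linarith)
  have hle2 : u ^ 2 ≤ v ^ 2 := by
    have := div_nonneg hnum hRAB.le
    linarith [heq ▸ this]
  have huv : u ≤ v := le_of_pow_le_pow_left₀ two_ne_zero hv0 hle2
  have hiff2 : u = v ↔ ‖Q - a‖ = r := by
    constructor
    · intro h
      have h0 : v ^ 2 - u ^ 2 = 0 := by rw [h]; ring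
      rw [heq, div_eq_zero_iff] at h0
      rcases h0 with h0 | h0
      · rcases mul_eq_zero.mp h0 with h0 | h0
        · linarith
        · have ht' : t = r ^ 2 := by linarith
          rw [htdef] at ht'
          exact (pow_left_inj₀ (norm_nonneg _) hrpos.le two_ne_zero).mp ht'
      · exact absurd h0 hRAB.ne'
    · intro h
      have ht' : t = r ^ 2 := by rw [htdef, h]
      have h0 : v ^ 2 - u ^ 2 = 0 := by rw [heq, ht']; simp
      have h2 : u ^ 2 = v ^ 2 := by linarith
      exact (pow_left_inj₀ hu0 hv0 two_ne_zero).mp h2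
  have hd1 : hdist P Q = 2 * Real.arsinh u := rfl
  have hd2 : hdist (σ P) Q = 2 * Real.arsinh v := rfl
  constructor
  · rw [hd1, hd2]
    have := Real.arsinh_le_arsinh.mpr huv
    linarith
  · rw [hd1, hd2, ← hiff2]
    constructor
    · intro h
      have : Real.arsinh u = Real.arsinh v := by linarith
      exact Real.arsinh_injective this
    · intro h; rw [h]
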